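/- arXiv:2004.02469 — 2 statements merged into one kernel-verified Lean document; each statement's English description precedes it below -/
import Mathlib

section
/- (Theorem 2, uniqueness.) Assume M > m* and α ∈ (0,1]. If a pair (T, u*) with T > 0 and u* : [0,T] → [0,M] measurable satisfies p_{u*}(T) = θ and minimizes J_α(T,u) = (1−α)·∫₀^T u(t) dt + α·T over all such admissible pairs, then T = T* and u* = M almost everywhere on [0,T*]. -/
/-!
Because a non-integrable velocity would make the integral formulation read `p T = 0 ≠ θ`, the
state is a genuine absolutely continuous solution. Just below `0` and on `[θ, 1)` the velocity
`f + u g` is nonnegative for every `u ∈ [0, M]`, so barrier arguments keep any trajectory that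
reaches `θ` at time `T` inside `[0, θ]`, where `f ≤ 0 < g` and `F = f + M g > 0`.

With `Φ` a primitive of `1 / F`, the chain rule for absolutely continuous functions gives
`T* = Φ θ = ∫₀ᵀ (f(p) + u g(p)) / F(p)`, hence
`J_α(T, u) - J_α(T*, M) = ∫₀ᵀ (M - u) (α g(p) - (1 - α) f(p)) / F(p)`,
whose integrand is nonnegative and vanishes only where `u = M`. The constant control `M` is
admissible with time `T*` (invert `Φ` to solve `ψ' = F(ψ)`), so optimality of `(T, u)` forces
`u = M` a.e., and then `T = T*`.
-/

/-- A pair (u,p) is an admissible control/state pair on [0,T] with control bound M: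
u is measurable with values in [0,M], and p is the (Carathéodory / absolutely
continuous) solution of p' = f(p) + u·g(p) a.e. on (0,T) with p(0) = 0, expressed
through the equivalent integral formulation. -/
def IsTrajectory (f g : ℝ → ℝ) (T M : ℝ) (u p : ℝ → ℝ) : Prop :=
  Measurable u ∧ (∀ t, u t ∈ Set.Icc (0:ℝ) M) ∧
  ContinuousOn p (Set.Icc 0 T) ∧ p 0 = 0 ∧
  ∀ t ∈ Set.Icc (0:ℝ) T, p t = ∫ s in (0:ℝ)..t, (f (p s) + u s * g (p s))

open MeasureTheory Set Filter Topology intervalIntegral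

section Barrier

variable {p : ℝ → ℝ} {a b l L : ℝ}

theorem ContinuousOn.forall_ge_of_barrier (hp : ContinuousOn p (Icc a b)) (hl : l < L)
    (ha : L ≤ p a)
    (hmono : ∀ c t, a ≤ c → c ≤ t → t ≤ b → (∀ s ∈ Icc c t, p s ∈ Ioc l L) → p c ≤ p t) :
    ∀ t ∈ Icc a b, L ≤ p t := by
  intro t ht
  by_contra! hpt
  set S := {s ∈ Icc a t | L ≤ p s}
  have hS : IsClosed S :=
    (hp.mono (Icc_subset_Icc_right ht.2)).preimage_isClosed_of_isClosed isClosed_Icc isClosed_Ici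
  have hbdd : BddAbove S := ⟨t, fun s hs => hs.1.2⟩
  have hcS : sSup S ∈ S := hS.csSup_mem ⟨a, ⟨le_rfl, ht.1⟩, ha⟩ hbdd
  set c := sSup S
  have hct : c < t := hcS.1.2.lt_of_ne (by rintro hc; rw [hc] at hcS; exact hpt.not_ge hcS.2)
  have hbelow : ∀ s ∈ Ioc c t, p s < L := fun s hs => by
    by_contra! h
    exact hs.1.not_ge (le_csSup hbdd ⟨⟨hcS.1.1.trans hs.1.le, hs.2⟩, h⟩)
  have hpc : ContinuousWithinAt p (Icc c t) c :=
    hp.mono (Icc_subset_Icc hcS.1.1 ht.2) c (left_mem_Icc.2 hct.le)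
  have hcL : p c = L := by
    refine le_antisymm ((hpc.mono Ioc_subset_Icc_self).closure_le ?_ continuousWithinAt_const
      fun s hs => (hbelow s hs).le) hcS.2
    rw [closure_Ioc hct.ne]
    exact left_mem_Icc.2 hct.le
  have hnear : ∀ᶠ s in 𝓝[≥] c, l < p s := by
    rw [← nhdsWithin_Icc_eq_nhdsGE hct]
    exact hpc.eventually (lt_mem_nhds (hcL ▸ hl))
  obtain ⟨r, hcr, hr⟩ := mem_nhdsGE_iff_exists_Icc_subset.1 hnear
  set t' := min r t
  have hct' : c < t' := lt_min hcr hct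
  have hmid : ∀ s ∈ Icc c t', p s ∈ Ioc l L := fun s hs =>
    ⟨hr ⟨hs.1, hs.2.trans (min_le_left _ _)⟩, by
      rcases hs.1.eq_or_lt with rfl | h
      · exact hcL.le
      · exact (hbelow s ⟨h, hs.2.trans (min_le_right _ _)⟩).le⟩
  have hdrop : p t' < p c := hcL ▸ hbelow t' ⟨hct', min_le_right _ _⟩
  exact hdrop.not_ge (hmono c t' hcS.1.1 hct'.le ((min_le_right _ _).trans ht.2) hmid)

theorem ContinuousOn.forall_le_of_barrier {h : ℝ} (hp : ContinuousOn p (Icc a b)) (hh : L < h)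
    (hb : p b ≤ L)
    (hmono : ∀ c t, a ≤ c → c ≤ t → t ≤ b → (∀ s ∈ Icc c t, p s ∈ Ico L h) → p c ≤ p t) :
    ∀ t ∈ Icc a b, p t ≤ L := by
  have hq : ContinuousOn (fun s => -p (-s)) (Icc (-b) (-a)) :=
    (hp.comp continuousOn_neg fun s hs => ⟨le_neg.1 hs.2, neg_le.1 hs.1⟩).neg
  intro t ht
  have := hq.forall_ge_of_barrier (neg_lt_neg hh) (by simpa using hb)
    (fun c s hc hcs hs hmid => ?_) (-t) ⟨neg_le_neg ht.2, neg_le_neg ht.1⟩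
  · simpa using this
  · simpa using hmono (-s) (-c) (le_neg.1 hs) (neg_le_neg hcs) (neg_le.1 hc) fun r hr => by
      simpa [and_comm] using hmid (-r) ⟨le_neg.1 hr.2, neg_le.1 hr.1⟩

end Barrier

theorem LipschitzWith.comp_absolutelyContinuousOnInterval {X Y : Type*} [PseudoMetricSpace X]
    [PseudoMetricSpace Y] {Φ : X → Y} {K : NNReal} (hΦ : LipschitzWith K Φ) {p : ℝ → X}
    {a b : ℝ} (hp : AbsolutelyContinuousOnInterval p a b) :
    AbsolutelyContinuousOnInterval (Φ ∘ p) a b := by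
  unfold AbsolutelyContinuousOnInterval at hp ⊢
  have hKp := hp.const_mul (K : ℝ)
  rw [mul_zero] at hKp
  refine squeeze_zero (fun _ => Finset.sum_nonneg fun _ _ => dist_nonneg) (fun E => ?_) hKp
  rw [Finset.mul_sum]
  exact Finset.sum_le_sum fun i _ => hΦ.dist_le_mul _ _

theorem IntervalIntegrable.integral_comp_primitive_mul {v γ Φ : ℝ → ℝ} {a b C : ℝ}
    (hv : IntervalIntegrable v volume a b) (hΦ : ∀ x, HasDerivAt Φ (γ x) x)
    (hγ : ∀ x, ‖γ x‖ ≤ C) :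
    ∫ t in a..b, γ (∫ s in a..t, v s) * v t = Φ (∫ s in a..b, v s) - Φ 0 := by
  have hΦlip : LipschitzWith C.toNNReal Φ :=
    lipschitzWith_of_nnnorm_deriv_le (fun x => (hΦ x).differentiableAt) fun x => by
      rw [(hΦ x).deriv, ← NNReal.coe_le_coe, coe_nnnorm, Real.coe_toNNReal']
      exact (hγ x).trans (le_max_left _ _)
  have hac := hΦlip.comp_absolutelyContinuousOnInterval
    (hv.absolutelyContinuousOnInterval_intervalIntegral (c := a) left_mem_uIcc)
  have hftc := hac.integral_deriv_eq_sub
  simp only [Function.comp_apply, integral_same] at hftc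
  rw [← hftc]
  refine integral_congr_ae ?_
  filter_upwards [hv.ae_hasDerivAt_integral] with t ht htab
  exact (((hΦ _).comp t (ht (uIoc_subset_uIcc htab) a left_mem_uIcc)).deriv).symm

theorem exists_hasDerivAt_eq_comp_of_pos {F : ℝ → ℝ} {C : ℝ} (hF : Continuous F)
    (hpos : ∀ x, 0 < F x) (hC : ∀ x, F x ≤ C) :
    ∃ ψ : ℝ → ℝ, Monotone ψ ∧ (∀ t, HasDerivAt ψ (F (ψ t)) t) ∧
      ∀ x, ψ (∫ y in (0:ℝ)..x, (F y)⁻¹) = x := by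
  have hγ : Continuous fun x => (F x)⁻¹ := hF.inv₀ fun x => (hpos x).ne'
  set Φ : ℝ → ℝ := fun x => ∫ y in (0:ℝ)..x, (F y)⁻¹
  have hΦ : ∀ x, HasDerivAt Φ (F x)⁻¹ x := fun x =>
    integral_hasDerivAt_right (hγ.intervalIntegrable _ _) (hγ.stronglyMeasurableAtFilter _ _)
      hγ.continuousAt
  have hΦd : Differentiable ℝ Φ := fun x => (hΦ x).differentiableAt
  have hmono : StrictMono Φ :=
    strictMono_of_deriv_pos fun x => (hΦ x).deriv ▸ inv_pos.2 (hpos x)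
  have hexp : ∀ x y, x ≤ y → C⁻¹ * (y - x) ≤ Φ y - Φ x :=
    mul_sub_le_image_sub_of_le_deriv hΦd fun x => (hΦ x).deriv ▸ inv_anti₀ (hpos x) (hC x)
  have hC0 : 0 < C⁻¹ := inv_pos.2 ((hpos 0).trans_le (hC 0))
  have hsurj : Function.Surjective Φ := by
    refine hΦd.continuous.surjective ?_ ?_
    · refine tendsto_atTop_mono' _ ?_
        (tendsto_atTop_add_const_right _ (Φ 0) (tendsto_id.const_mul_atTop hC0))
      filter_upwards [eventually_ge_atTop 0] with x hx
      simp only [id]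
      linarith [hexp 0 x hx]
    · refine tendsto_atBot_mono' _ ?_
        (tendsto_atBot_add_const_right _ (Φ 0) (tendsto_id.const_mul_atBot hC0))
      filter_upwards [eventually_le_atBot 0] with x hx
      simp only [id]
      linarith [hexp x 0 hx]
  set e := hmono.orderIsoOfSurjective Φ hsurj
  refine ⟨e.symm, e.symm.monotone, fun t => ?_, e.symm_apply_apply⟩
  have hinv := (hΦ (e.symm t)).of_local_left_inverse e.symm.continuous.continuousAt
    (inv_pos.2 (hpos _)).ne' (Eventually.of_forall e.apply_symm_apply)
  rwa [inv_inv] at hinv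

theorem ContinuousOn.exists_continuous_extension_Icc_pos {F : ℝ → ℝ} {a b : ℝ} (hab : a ≤ b)
    (hF : ContinuousOn F (Icc a b)) (hpos : ∀ x ∈ Icc a b, 0 < F x) :
    ∃ G : ℝ → ℝ, Continuous G ∧ EqOn G F (Icc a b) ∧
      ∃ m C, 0 < m ∧ ∀ x, m ≤ G x ∧ G x ≤ C := by
  obtain ⟨x₀, hx₀, hmin⟩ := isCompact_Icc.exists_isMinOn (nonempty_Icc.2 hab) hF
  obtain ⟨x₁, -, hmax⟩ := isCompact_Icc.exists_isMaxOn (nonempty_Icc.2 hab) hF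
  refine ⟨IccExtend hab ((Icc a b).domRestrict F), hF.domRestrict.Icc_extend',
    fun x hx => IccExtend_of_mem hab _ hx, F x₀, F x₁, hpos x₀ hx₀, fun x => ?_⟩
  rw [IccExtend_apply]
  exact ⟨hmin (projIcc a b hab x).2, hmax (projIcc a b hab x).2⟩

theorem exists_isTrajectory_const_of_pos {f g : ℝ → ℝ} {M θ : ℝ} (hθ : 0 < θ) (hM : 0 ≤ M)
    (hF : ContinuousOn (fun x => f x + M * g x) (Icc 0 θ))
    (hFpos : ∀ x ∈ Icc 0 θ, 0 < f x + M * g x) :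
    0 < ∫ x in (0:ℝ)..θ, (f x + M * g x)⁻¹ ∧
      ∃ ψ, IsTrajectory f g (∫ x in (0:ℝ)..θ, (f x + M * g x)⁻¹) M (fun _ => M) ψ ∧
        ψ (∫ x in (0:ℝ)..θ, (f x + M * g x)⁻¹) = θ := by
  obtain ⟨G, hG, hGF, m, C, hm, hGmC⟩ := hF.exists_continuous_extension_Icc_pos hθ.le hFpos
  obtain ⟨ψ, hψmono, hψ, hψΦ⟩ := exists_hasDerivAt_eq_comp_of_pos hG
    (fun x => hm.trans_le (hGmC x).1) (fun x => (hGmC x).2)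
  set Tstar := ∫ x in (0:ℝ)..θ, (f x + M * g x)⁻¹
  have hTstar : ∫ x in (0:ℝ)..θ, (G x)⁻¹ = Tstar :=
    integral_congr fun x hx => by rw [hGF (uIcc_of_le hθ.le ▸ hx)]
  have hψ0 : ψ 0 = 0 := by simpa using hψΦ 0
  have hψT : ψ Tstar = θ := hTstar ▸ hψΦ θ
  have hψc : Continuous ψ := continuous_iff_continuousAt.2 fun t => (hψ t).continuousAt
  refine ⟨lt_of_not_ge fun h => hθ.not_ge (hψT ▸ hψ0 ▸ hψmono h),
    ψ, ⟨measurable_const, fun _ => ⟨hM, le_rfl⟩, hψc.continuousOn, hψ0, fun t ht => ?_⟩, hψT⟩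
  rw [integral_congr (g := fun s => G (ψ s)) fun s hs => ?_,
    integral_eq_sub_of_hasDerivAt (fun s _ => hψ s) ((hG.comp hψc).intervalIntegrable _ _), hψ0,
    sub_zero]
  rw [uIcc_of_le ht.1] at hs
  exact (hGF ⟨hψ0 ▸ hψmono hs.1, hψT ▸ hψmono (hs.2.trans ht.2)⟩).symm

theorem ae_eq_of_integral_sub_mul_nonpos {u q : ℝ → ℝ} {M T : ℝ} (hT : 0 ≤ T)
    (hu : IntervalIntegrable u volume 0 T) (huM : ∀ t, u t ≤ M) (hq : ∀ t ∈ Icc 0 T, 0 < q t)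
    (hqc : ContinuousOn q (Icc 0 T)) (hle : ∫ t in (0:ℝ)..T, (M - u t) * q t ≤ 0) :
    ∀ᵐ t ∂volume.restrict (Ioc 0 T), u t = M := by
  have hw : ∀ t ∈ Icc 0 T, 0 ≤ (M - u t) * q t := fun t ht =>
    mul_nonneg (sub_nonneg.2 (huM t)) (hq t ht).le
  have hzero := (integral_eq_zero_iff_of_le_of_nonneg_ae hT
    ((ae_restrict_iff' measurableSet_Ioc).2 (Eventually.of_forall fun t ht =>
      hw t (Ioc_subset_Icc_self ht)))
    ((intervalIntegrable_const.sub hu).mul_continuousOn ((uIcc_of_le hT).symm ▸ hqc))).1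
    (le_antisymm hle (integral_nonneg hT hw))
  filter_upwards [hzero, ae_restrict_mem measurableSet_Ioc] with t ht htT
  rcases mul_eq_zero.1 ht with h | h
  · linarith
  · exact absurd h (hq t (Ioc_subset_Icc_self htT)).ne'

namespace IsTrajectory

variable {f g : ℝ → ℝ} {T M θ : ℝ} {u p : ℝ → ℝ}

theorem intervalIntegrable_of_ne_zero (hp : IsTrajectory f g T M u p) (hT : 0 ≤ T)
    (hpT : p T ≠ 0) : IntervalIntegrable (fun s => f (p s) + u s * g (p s)) volume 0 T := by
  by_contra h
  exact hpT ((hp.2.2.2.2 T ⟨hT, le_rfl⟩).trans (integral_undef h))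

theorem sub_eq_integral (hp : IsTrajectory f g T M u p)
    (hv : IntervalIntegrable (fun s => f (p s) + u s * g (p s)) volume 0 T) {c t : ℝ}
    (hc : 0 ≤ c) (hct : c ≤ t) (ht : t ≤ T) :
    p t - p c = ∫ s in c..t, (f (p s) + u s * g (p s)) := by
  have hsub : ∀ r, 0 ≤ r → r ≤ T →
      IntervalIntegrable (fun s => f (p s) + u s * g (p s)) volume 0 r :=
    fun r h0 hr => hv.mono_set (uIcc_subset_uIcc left_mem_uIcc (mem_uIcc_of_le h0 hr))
  rw [hp.2.2.2.2 t ⟨hc.trans hct, ht⟩, hp.2.2.2.2 c ⟨hc, hct.trans ht⟩,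
    integral_interval_sub_left (hsub t (hc.trans hct) ht) (hsub c hc (hct.trans ht))]

theorem le_of_velocity_nonneg (hp : IsTrajectory f g T M u p)
    (hv : IntervalIntegrable (fun s => f (p s) + u s * g (p s)) volume 0 T) {c t : ℝ}
    (hc : 0 ≤ c) (hct : c ≤ t) (ht : t ≤ T)
    (hvel : ∀ s ∈ Icc c t, 0 ≤ f (p s) + u s * g (p s)) : p c ≤ p t := by
  linarith [hp.sub_eq_integral hv hc hct ht, integral_nonneg (μ := volume) hct hvel]

theorem mapsTo_Icc (hp : IsTrajectory f g T M u p) (hT : 0 ≤ T) (hθ : 0 < θ) (hpT : p T = θ)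
    {l h : ℝ} (hl : l < 0) (hh : θ < h)
    (hvel : ∀ x ∈ Ioc l 0 ∪ Ico θ h, ∀ w ∈ Icc 0 M, 0 ≤ f x + w * g x) :
    MapsTo p (Icc 0 T) (Icc 0 θ) := by
  have hv := hp.intervalIntegrable_of_ne_zero hT (hpT ▸ hθ.ne')
  have hmono : ∀ S ⊆ Ioc l 0 ∪ Ico θ h,
      ∀ c t, 0 ≤ c → c ≤ t → t ≤ T → (∀ s ∈ Icc c t, p s ∈ S) → p c ≤ p t :=
    fun S hS c t hc hct ht hpS =>
      hp.le_of_velocity_nonneg hv hc hct ht fun s hs => hvel _ (hS (hpS s hs)) _ (hp.2.1 s)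
  intro t ht
  exact ⟨hp.2.2.1.forall_ge_of_barrier hl hp.2.2.2.1.ge (hmono _ subset_union_left) t ht,
    hp.2.2.1.forall_le_of_barrier hh hpT.le (hmono _ subset_union_right) t ht⟩

theorem integral_inv_eq (hp : IsTrajectory f g T M u p) (hT : 0 ≤ T) (hθ : 0 < θ)
    (hpT : p T = θ) (hmaps : MapsTo p (Icc 0 T) (Icc 0 θ))
    (hF : ContinuousOn (fun x => f x + M * g x) (Icc 0 θ))
    (hFpos : ∀ x ∈ Icc 0 θ, 0 < f x + M * g x) :
    ∫ x in (0:ℝ)..θ, (f x + M * g x)⁻¹ =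
      ∫ t in (0:ℝ)..T, (f (p t) + M * g (p t))⁻¹ * (f (p t) + u t * g (p t)) := by
  obtain ⟨G, hG, hGF, m, _, hm, hGm⟩ := hF.exists_continuous_extension_Icc_pos hθ.le hFpos
  have hγ : Continuous fun x => (G x)⁻¹ := hG.inv₀ fun x => (hm.trans_le (hGm x).1).ne'
  have hΦ : ∀ x, HasDerivAt (fun x => ∫ y in (0:ℝ)..x, (G y)⁻¹) (G x)⁻¹ x := fun x =>
    integral_hasDerivAt_right (hγ.intervalIntegrable _ _) (hγ.stronglyMeasurableAtFilter _ _)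
      hγ.continuousAt
  have hbound : ∀ x, ‖(G x)⁻¹‖ ≤ m⁻¹ := fun x => by
    rw [norm_inv, Real.norm_of_nonneg (hm.le.trans (hGm x).1)]
    exact inv_anti₀ hm (hGm x).1
  have hchain := (hp.intervalIntegrable_of_ne_zero hT (hpT ▸ hθ.ne')).integral_comp_primitive_mul
    hΦ hbound
  rw [← hp.2.2.2.2 T ⟨hT, le_rfl⟩, hpT, integral_same, sub_zero] at hchain
  calc ∫ x in (0:ℝ)..θ, (f x + M * g x)⁻¹ = ∫ x in (0:ℝ)..θ, (G x)⁻¹ :=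
        integral_congr fun x hx => by rw [hGF (uIcc_of_le hθ.le ▸ hx)]
    _ = _ := hchain.symm
    _ = _ := integral_congr fun t ht => by
        rw [← hp.2.2.2.2 t (uIcc_of_le hT ▸ ht), hGF (hmaps (uIcc_of_le hT ▸ ht))]

theorem intervalIntegrable_control (hp : IsTrajectory f g T M u p) :
    IntervalIntegrable u volume 0 T := by
  refine (intervalIntegrable_const (c := M)).mono_fun hp.1.aestronglyMeasurable
    (Eventually.of_forall fun t => ?_)
  simp only [Real.norm_eq_abs]
  exact abs_le_abs (hp.2.1 t).2 (by linarith [(hp.2.1 t).1, (hp.2.1 t).2])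

theorem cost_sub_eq_integral (hp : IsTrajectory f g T M u p) (hT : 0 ≤ T) (hθ : 0 < θ)
    (hpT : p T = θ) (hmaps : MapsTo p (Icc 0 T) (Icc 0 θ))
    (hF : ContinuousOn (fun x => f x + M * g x) (Icc 0 θ))
    (hFpos : ∀ x ∈ Icc 0 θ, 0 < f x + M * g x) (α : ℝ) :
    (1 - α) * (∫ t in (0:ℝ)..T, u t) + α * T
        - ((1 - α) * M + α) * ∫ x in (0:ℝ)..θ, (f x + M * g x)⁻¹ =
      ∫ t in (0:ℝ)..T,
        (M - u t) * ((α * g (p t) - (1 - α) * f (p t)) / (f (p t) + M * g (p t))) := by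
  have hw : IntervalIntegrable
      (fun t => (f (p t) + M * g (p t))⁻¹ * (f (p t) + u t * g (p t))) volume 0 T :=
    (hp.intervalIntegrable_of_ne_zero hT (hpT ▸ hθ.ne')).continuousOn_mul <|
      (uIcc_of_le hT).symm ▸ (hF.comp hp.2.2.1 hmaps).inv₀ fun t ht => (hFpos _ (hmaps ht)).ne'
  have hu := hp.intervalIntegrable_control
  calc _ = ∫ t in (0:ℝ)..T, ((1 - α) * u t + α
        - ((1 - α) * M + α) * ((f (p t) + M * g (p t))⁻¹ * (f (p t) + u t * g (p t)))) := by
        rw [integral_sub ((hu.const_mul _).add intervalIntegrable_const) (hw.const_mul _),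
          integral_add (hu.const_mul _) intervalIntegrable_const,
          intervalIntegral.integral_const_mul, intervalIntegral.integral_const_mul,
          intervalIntegral.integral_const, smul_eq_mul, sub_zero,
          hp.integral_inv_eq hT hθ hpT hmaps hF hFpos]
        ring
    _ = _ := integral_congr fun t ht => by
        have := (hFpos _ (hmaps (uIcc_of_le hT ▸ ht))).ne'
        field_simp
        ring

theorem eq_of_cost_le {α : ℝ} (hp : IsTrajectory f g T M u p) (hT : 0 < T) (hθ : 0 < θ)
    (hpT : p T = θ) (hmaps : MapsTo p (Icc 0 T) (Icc 0 θ)) (hfc : ContinuousOn f (Icc 0 θ))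
    (hgc : ContinuousOn g (Icc 0 θ)) (hf : ∀ x ∈ Icc 0 θ, f x ≤ 0)
    (hg : ∀ x ∈ Icc 0 θ, 0 < g x) (hFpos : ∀ x ∈ Icc 0 θ, 0 < f x + M * g x)
    (hα0 : 0 < α) (hα1 : α ≤ 1)
    (hle : (1 - α) * (∫ t in (0:ℝ)..T, u t) + α * T
      ≤ ((1 - α) * M + α) * ∫ x in (0:ℝ)..θ, (f x + M * g x)⁻¹) :
    (∀ᵐ t ∂volume.restrict (Ioc 0 T), u t = M) ∧ T = ∫ x in (0:ℝ)..θ, (f x + M * g x)⁻¹ := by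
  have hF : ContinuousOn (fun x => f x + M * g x) (Icc 0 θ) :=
    hfc.add (continuousOn_const.mul hgc)
  have hpc := hp.2.2.1
  have hq : ∀ t ∈ Icc 0 T,
      0 < (α * g (p t) - (1 - α) * f (p t)) / (f (p t) + M * g (p t)) := fun t ht =>
    div_pos (by nlinarith [hf _ (hmaps ht), hg _ (hmaps ht)]) (hFpos _ (hmaps ht))
  have hcost := hp.cost_sub_eq_integral hT.le hθ hpT hmaps hF hFpos α
  have hge : 0 ≤ ∫ t in (0:ℝ)..T,
      (M - u t) * ((α * g (p t) - (1 - α) * f (p t)) / (f (p t) + M * g (p t))) :=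
    integral_nonneg hT.le fun t ht => mul_nonneg (sub_nonneg.2 (hp.2.1 t).2) (hq t ht).le
  have hu := ae_eq_of_integral_sub_mul_nonpos hT.le hp.intervalIntegrable_control
    (fun t => (hp.2.1 t).2) hq
    (((continuousOn_const.mul (hgc.comp hpc hmaps)).sub
      (continuousOn_const.mul (hfc.comp hpc hmaps))).div (hF.comp hpc hmaps)
      fun t ht => (hFpos _ (hmaps ht)).ne') (by linarith)
  have hint : ∫ t in (0:ℝ)..T, u t = T * M := by
    rw [intervalIntegral.integral_congr_ae (g := fun _ => M) ?_, intervalIntegral.integral_const,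
      smul_eq_mul, sub_zero]
    rw [uIoc_of_le hT.le]
    exact (ae_restrict_iff' measurableSet_Ioc).1 hu
  rw [hint] at hcost hle
  have hc : 0 < (1 - α) * M + α := by nlinarith [(hp.2.1 0).1.trans (hp.2.1 0).2]
  exact ⟨hu, le_antisymm (le_of_mul_le_mul_left (by linarith) hc)
    (le_of_mul_le_mul_left (by linarith) hc)⟩

theorem optimal_eq_bang {α l h : ℝ} (hp : IsTrajectory f g T M u p) (hT : 0 < T) (hθ : 0 < θ)
    (hpT : p T = θ) (hl : l < 0) (hh : θ < h)
    (hvel : ∀ x ∈ Ioc l 0 ∪ Ico θ h, ∀ w ∈ Icc 0 M, 0 ≤ f x + w * g x)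
    (hfc : ContinuousOn f (Icc 0 θ)) (hgc : ContinuousOn g (Icc 0 θ))
    (hf : ∀ x ∈ Icc 0 θ, f x ≤ 0) (hg : ∀ x ∈ Icc 0 θ, 0 < g x)
    (hFpos : ∀ x ∈ Icc 0 θ, 0 < f x + M * g x) (hα0 : 0 < α) (hα1 : α ≤ 1)
    (hopt : ∀ S : ℝ, 0 < S → ∀ v q : ℝ → ℝ, IsTrajectory f g S M v q → q S = θ →
      (1 - α) * (∫ t in (0:ℝ)..T, u t) + α * T ≤ (1 - α) * (∫ t in (0:ℝ)..S, v t) + α * S) :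
    T = ∫ x in (0:ℝ)..θ, (f x + M * g x)⁻¹ ∧ ∀ᵐ t ∂volume.restrict (Icc 0 T), u t = M := by
  obtain ⟨hTstar, ψ, hψ, hψT⟩ := exists_isTrajectory_const_of_pos hθ
    ((hp.2.1 0).1.trans (hp.2.1 0).2) (hfc.add (continuousOn_const.mul hgc)) hFpos
  have hle := hopt _ hTstar _ _ hψ hψT
  simp only [intervalIntegral.integral_const, smul_eq_mul, sub_zero] at hle
  obtain ⟨hu, hTeq⟩ := hp.eq_of_cost_le hT hθ hpT (hp.mapsTo_Icc hT.le hθ hpT hl hh hvel) hfc hgc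
    hf hg hFpos hα0 hα1 (by linarith)
  exact ⟨hTeq, by rwa [← Measure.restrict_congr_set Ioc_ae_eq_Icc]⟩

end IsTrajectory

theorem add_mul_pos_of_mem_upperBounds {f g : ℝ → ℝ} {S : Set ℝ} {m M : ℝ}
    (hm : m ∈ upperBounds ((fun x => -f x / g x) '' S)) (hM : m < M) (hg : ∀ x ∈ S, 0 < g x) :
    ∀ x ∈ S, 0 < f x + M * g x := fun x hx => by
  have := (div_le_iff₀ (hg x hx)).1 (hm ⟨x, hx, rfl⟩)
  nlinarith [hg x hx]

section Model

variable {b1 b2 d1 d2 K sh θ x : ℝ}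

noncomputable def totalBirth (b1 b2 sh x : ℝ) : ℝ := b1 * (1 - x) * (1 - sh * x) + b2 * x

noncomputable def drift (b1 b2 d1 d2 sh x : ℝ) : ℝ :=
  x * (1 - x) * (d1 * b2 - d2 * b1 * (1 - sh * x)) / totalBirth b1 b2 sh x

noncomputable def releaseGain (b1 b2 K sh x : ℝ) : ℝ :=
  (1 / K) * (b1 * (1 - x) * (1 - sh * x)) / totalBirth b1 b2 sh x

theorem threshold_mem_Ioo (hsh0 : 0 < sh) (hlow : 1 - sh < d1 * b2 / (d2 * b1))
    (hhigh : d1 * b2 / (d2 * b1) < 1) (hθ : θ = (1 / sh) * (1 - d1 * b2 / (d2 * b1))) :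
    θ ∈ Ioo 0 1 := by
  have hshθ : sh * θ = 1 - d1 * b2 / (d2 * b1) := by rw [hθ]; field_simp
  constructor <;> nlinarith

theorem totalBirth_pos (hb1 : 0 < b1) (hb2 : 0 < b2) (hsh0 : 0 ≤ sh) (hsh1 : sh ≤ 1)
    (hx : x ∈ Ioc (-(b1 / b2)) 1) : 0 < totalBirth b1 b2 sh x := by
  have hb2x : -b1 < b2 * x := by
    have := mul_lt_mul_of_pos_left hx.1 hb2
    rwa [mul_neg, mul_div_cancel₀ _ hb2.ne'] at this
  unfold totalBirth
  rcases le_or_gt x 0 with hx0 | hx0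
  · nlinarith [mul_nonneg hsh0 (sq_nonneg x), mul_nonpos_iff.2 (Or.inl ⟨hsh0, hx0⟩)]
  · nlinarith [mul_nonneg (mul_nonneg hb1.le (sub_nonneg.2 hx.2))
      (sub_nonneg.2 (mul_le_one₀ hsh1 hx0.le hx.2))]

theorem drift_eq (hd2 : d2 ≠ 0) (hb1 : b1 ≠ 0) (hsh : sh ≠ 0)
    (hθ : θ = (1 / sh) * (1 - d1 * b2 / (d2 * b1))) :
    drift b1 b2 d1 d2 sh x = d2 * b1 * sh * (x * (1 - x) * (x - θ)) / totalBirth b1 b2 sh x := by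
  unfold drift
  congr 1
  rw [hθ]
  field_simp
  ring

theorem releaseGain_pos (hb1 : 0 < b1) (hb2 : 0 < b2) (hK : 0 < K) (hsh0 : 0 ≤ sh)
    (hsh1 : sh ≤ 1) (hx : x ∈ Ioo (-(b1 / b2)) 1) : 0 < releaseGain b1 b2 K sh x := by
  have hshx : sh * x < 1 := by
    rcases le_or_gt x 0 with hx0 | hx0
    · nlinarith
    · nlinarith [mul_le_mul_of_nonneg_right hsh1 hx0.le, hx.2]
  exact div_pos (mul_pos (by positivity) (mul_pos (mul_pos hb1 (by linarith [hx.2]))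
    (by linarith))) (totalBirth_pos hb1 hb2 hsh0 hsh1 (Ioo_subset_Ioc_self hx))

theorem drift_add_mul_releaseGain_nonneg (hb1 : 0 < b1) (hb2 : 0 < b2) (hd2 : 0 < d2)
    (hK : 0 < K) (hsh0 : 0 < sh) (hsh1 : sh ≤ 1)
    (hθ : θ = (1 / sh) * (1 - d1 * b2 / (d2 * b1))) (hθ0 : 0 ≤ θ)
    (hx : x ∈ Ioc (-(b1 / b2)) 0 ∪ Ico θ 1) {w : ℝ} (hw : 0 ≤ w) :
    0 ≤ drift b1 b2 d1 d2 sh x + w * releaseGain b1 b2 K sh x := by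
  have hl : -(b1 / b2) < 0 := neg_lt_zero.2 (div_pos hb1 hb2)
  have hxD : x ∈ Ioo (-(b1 / b2)) 1 := by
    rcases hx with hx | hx
    · exact ⟨hx.1, hx.2.trans_lt zero_lt_one⟩
    · exact ⟨hl.trans_le (hθ0.trans hx.1), hx.2⟩
  refine add_nonneg ?_ (mul_nonneg hw (releaseGain_pos hb1 hb2 hK hsh0.le hsh1 hxD).le)
  rw [drift_eq hd2.ne' hb1.ne' hsh0.ne' hθ]
  refine div_nonneg (mul_nonneg (by positivity) ?_)
    (totalBirth_pos hb1 hb2 hsh0.le hsh1 (Ioo_subset_Ioc_self hxD)).le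
  rcases hx with hx | hx
  · have := mul_nonneg (mul_nonneg (neg_nonneg.2 hx.2) (sub_nonneg.2 hxD.2.le))
      (sub_nonneg.2 (hx.2.trans hθ0))
    linarith
  · exact mul_nonneg (mul_nonneg (hθ0.trans hx.1) (sub_nonneg.2 hxD.2.le)) (sub_nonneg.2 hx.1)

theorem drift_nonpos (hb1 : 0 < b1) (hb2 : 0 < b2) (hd2 : 0 < d2) (hsh0 : 0 < sh)
    (hsh1 : sh ≤ 1) (hθ : θ = (1 / sh) * (1 - d1 * b2 / (d2 * b1))) (hθ1 : θ ≤ 1)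
    (hx : x ∈ Icc 0 θ) : drift b1 b2 d1 d2 sh x ≤ 0 := by
  rw [drift_eq hd2.ne' hb1.ne' hsh0.ne' hθ]
  refine div_nonpos_of_nonpos_of_nonneg (mul_nonpos_of_nonneg_of_nonpos (by positivity) ?_)
    (totalBirth_pos hb1 hb2 hsh0.le hsh1
      ⟨(neg_lt_zero.2 (div_pos hb1 hb2)).trans_le hx.1, hx.2.trans hθ1⟩).le
  exact mul_nonpos_of_nonneg_of_nonpos (mul_nonneg hx.1 (by linarith [hx.2])) (by linarith [hx.2])

theorem continuousOn_drift (hb1 : 0 < b1) (hb2 : 0 < b2) (hsh0 : 0 ≤ sh) (hsh1 : sh ≤ 1) :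
    ContinuousOn (drift b1 b2 d1 d2 sh) (Ioc (-(b1 / b2)) 1) := by
  unfold drift
  exact ContinuousOn.div (by fun_prop) (by unfold totalBirth; fun_prop)
    fun x hx => (totalBirth_pos hb1 hb2 hsh0 hsh1 hx).ne'

theorem continuousOn_releaseGain (hb1 : 0 < b1) (hb2 : 0 < b2) (hsh0 : 0 ≤ sh) (hsh1 : sh ≤ 1) :
    ContinuousOn (releaseGain b1 b2 K sh) (Ioc (-(b1 / b2)) 1) := by
  unfold releaseGain
  exact ContinuousOn.div (by fun_prop) (by unfold totalBirth; fun_prop)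
    fun x hx => (totalBirth_pos hb1 hb2 hsh0 hsh1 hx).ne'

end Model

theorem stmt_16_general
    (b1 b2 d1 d2 K sh : ℝ)
    (hb1 : 0 < b1) (hb2 : 0 < b2) (hd2 : 0 < d2)
    (hK : 0 < K) (hsh0 : 0 < sh) (hsh1 : sh ≤ 1)
    (hlow : 1 - sh < d1 * b2 / (d2 * b1)) (hhigh : d1 * b2 / (d2 * b1) < 1)
    (f g : ℝ → ℝ)
    (hf : ∀ p, f p = p * (1 - p) * (d1 * b2 - d2 * b1 * (1 - sh * p)) /
      (b1 * (1 - p) * (1 - sh * p) + b2 * p))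
    (hg : ∀ p, g p = (1 / K) * (b1 * (1 - p) * (1 - sh * p)) /
      (b1 * (1 - p) * (1 - sh * p) + b2 * p))
    (θ : ℝ) (hθ : θ = (1 / sh) * (1 - d1 * b2 / (d2 * b1)))
    (mstar : ℝ)
    (hmstar : IsGreatest ((fun p => -f p / g p) '' Set.Icc 0 θ) mstar)
    (M : ℝ) (hM : mstar < M)
    (Tstar : ℝ) (hTstar : Tstar = ∫ ν in (0:ℝ)..θ, (f ν + M * g ν)⁻¹)
    (α : ℝ) (hα0 : 0 < α) (hα1 : α ≤ 1)
    (T : ℝ) (hT : 0 < T)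
    (ustar pstate : ℝ → ℝ)
    (htraj : IsTrajectory f g T M ustar pstate) (hreach : pstate T = θ)
    (hopt : ∀ S : ℝ, 0 < S → ∀ u p : ℝ → ℝ, IsTrajectory f g S M u p → p S = θ →
        (1 - α) * (∫ t in (0:ℝ)..T, ustar t) + α * T
          ≤ (1 - α) * (∫ t in (0:ℝ)..S, u t) + α * S) :
    T = Tstar ∧
    ∀ᵐ t ∂(MeasureTheory.volume.restrict (Set.Icc (0:ℝ) Tstar)), ustar t = M := by
  obtain rfl : f = drift b1 b2 d1 d2 sh := funext hf
  obtain rfl : g = releaseGain b1 b2 K sh := funext hg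
  obtain ⟨hθ0, hθ1⟩ := threshold_mem_Ioo hsh0 hlow hhigh hθ
  have hl : -(b1 / b2) < 0 := neg_lt_zero.2 (div_pos hb1 hb2)
  have hsub : Icc 0 θ ⊆ Ioc (-(b1 / b2)) 1 := fun x hx => ⟨hl.trans_le hx.1, hx.2.trans hθ1.le⟩
  have hgθ : ∀ x ∈ Icc 0 θ, 0 < releaseGain b1 b2 K sh x := fun x hx =>
    releaseGain_pos hb1 hb2 hK hsh0.le hsh1 ⟨hl.trans_le hx.1, hx.2.trans_lt hθ1⟩
  obtain ⟨hTeq, hu⟩ := htraj.optimal_eq_bang hT hθ0 hreach hl hθ1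
    (fun x hx w hw => drift_add_mul_releaseGain_nonneg hb1 hb2 hd2 hK hsh0 hsh1 hθ hθ0.le hx hw.1)
    ((continuousOn_drift hb1 hb2 hsh0.le hsh1).mono hsub)
    ((continuousOn_releaseGain hb1 hb2 hsh0.le hsh1).mono hsub)
    (fun x hx => drift_nonpos hb1 hb2 hd2 hsh0 hsh1 hθ hθ1.le hx) hgθ
    (add_mul_pos_of_mem_upperBounds hmstar.2 hM hgθ) hα0 hα1 hopt
  rw [← hTstar] at hTeq
  subst hTeq
  exact ⟨rfl, hu⟩

/-- Theorem 2, uniqueness: for M > m* and α ∈ (0,1], if (T,u*) is an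
admissible pair with p_{u*}(T) = θ minimizing J_α(T,u) = (1-α)∫₀^T u + αT over all
admissible pairs, then T = T* and u* = M a.e. on [0,T*]. -/
theorem stmt_16
    (b1 b2 d1 d2 K sh : ℝ)
    (hb1 : 0 < b1) (hb2 : 0 < b2) (hd1 : 0 < d1) (hd2 : 0 < d2)
    (hK : 0 < K) (hsh0 : 0 < sh) (hsh1 : sh ≤ 1)
    (hlow : 1 - sh < d1 * b2 / (d2 * b1)) (hhigh : d1 * b2 / (d2 * b1) < 1)
    (f g : ℝ → ℝ)
    (hf : ∀ p, f p = p * (1 - p) * (d1 * b2 - d2 * b1 * (1 - sh * p)) /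
      (b1 * (1 - p) * (1 - sh * p) + b2 * p))
    (hg : ∀ p, g p = (1 / K) * (b1 * (1 - p) * (1 - sh * p)) /
      (b1 * (1 - p) * (1 - sh * p) + b2 * p))
    (θ : ℝ) (hθ : θ = (1 / sh) * (1 - d1 * b2 / (d2 * b1)))
    (mstar : ℝ)
    (hmstar : IsGreatest ((fun p => -f p / g p) '' Set.Icc 0 θ) mstar)
    (M : ℝ) (hM : mstar < M)
    (Tstar : ℝ) (hTstar : Tstar = ∫ ν in (0:ℝ)..θ, (f ν + M * g ν)⁻¹)
    (α : ℝ) (hα0 : 0 < α) (hα1 : α ≤ 1)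
    (T : ℝ) (hT : 0 < T)
    (ustar pstate : ℝ → ℝ)
    (htraj : IsTrajectory f g T M ustar pstate) (hreach : pstate T = θ)
    (hopt : ∀ S : ℝ, 0 < S → ∀ u p : ℝ → ℝ, IsTrajectory f g S M u p → p S = θ →
        (1 - α) * (∫ t in (0:ℝ)..T, ustar t) + α * T
          ≤ (1 - α) * (∫ t in (0:ℝ)..S, u t) + α * S) :
    T = Tstar ∧
    ∀ᵐ t ∂(MeasureTheory.volume.restrict (Set.Icc (0:ℝ) Tstar)), ustar t = M :=
  stmt_16_general b1 b2 d1 d2 K sh hb1 hb2 hd2 hK hsh0 hsh1 hlow hhigh f g hf hg θ hθ mstar hmstar M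
    hM Tstar hTstar α hα0 hα1 T hT ustar pstate htraj hreach hopt
end

section
/- (Existence for the free-horizon problem.) Assume M > m* and α ∈ (0,1]. The infimum of J_α(T,u) = (1−α)·∫₀^T u(t) dt + α·T over all pairs (T, u) with T > 0, u : [0,T] → [0,M] measurable, and p_u(T) ≥ θ, is attained by some admissible pair. -/
open MeasureTheory intervalIntegral Set Filter NNReal

theorem LipschitzOnWith.comp_absolutelyContinuousOnInterval {X Y : Type*} [PseudoMetricSpace X]
    [PseudoMetricSpace Y] {Φ : X → Y} {K : ℝ≥0} {s : Set X} {q : ℝ → X} {a b : ℝ}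
    (hΦ : LipschitzOnWith K Φ s) (hq : AbsolutelyContinuousOnInterval q a b)
    (hqs : MapsTo q (uIcc a b) s) : AbsolutelyContinuousOnInterval (Φ ∘ q) a b := by
  rw [absolutelyContinuousOnInterval_iff] at hq ⊢
  intro ε hε
  obtain ⟨δ, hδ, hqδ⟩ := hq (ε / (K + 1)) (by positivity)
  refine ⟨δ, hδ, fun E hE hEδ => ?_⟩
  calc ∑ i ∈ Finset.range E.1, dist (Φ (q (E.2 i).1)) (Φ (q (E.2 i).2))
      ≤ ∑ i ∈ Finset.range E.1, K * dist (q (E.2 i).1) (q (E.2 i).2) := by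
        gcongr with i hi
        exact hΦ.dist_le_mul _ (hqs (hE.1 i hi).1) _ (hqs (hE.1 i hi).2)
    _ = K * ∑ i ∈ Finset.range E.1, dist (q (E.2 i).1) (q (E.2 i).2) := (Finset.mul_sum _ _ _).symm
    _ ≤ K * (ε / (K + 1)) := by gcongr; exact (hqδ E hE hEδ).le
    _ < (K + 1) * (ε / (K + 1)) := by gcongr; linarith
    _ = ε := by field_simp

theorem ContDiff.comp_absolutelyContinuousOnInterval {F : Type*} [NormedAddCommGroup F]
    [NormedSpace ℝ F] {Φ : ℝ → F} {q : ℝ → ℝ} {a b : ℝ} (hΦ : ContDiff ℝ 1 Φ)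
    (hq : AbsolutelyContinuousOnInterval q a b) : AbsolutelyContinuousOnInterval (Φ ∘ q) a b := by
  obtain ⟨R, hR⟩ :=
    (isCompact_uIcc.image_of_continuousOn hq.continuousOn).isBounded.subset_closedBall 0
  obtain ⟨K, hK⟩ := hΦ.contDiffOn.exists_lipschitzOnWith one_ne_zero (convex_closedBall 0 R)
    (isCompact_closedBall 0 R)
  exact hK.comp_absolutelyContinuousOnInterval hq fun t ht => hR (mem_image_of_mem q ht)

theorem intervalIntegral.integral_comp_primitive_mul {ρ h : ℝ → ℝ} {a b : ℝ}
    (hρ : Continuous ρ) (hh : IntervalIntegrable h volume a b) :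
    ∫ t in a..b, ρ (∫ s in a..t, h s) * h t = ∫ y in (0:ℝ)..(∫ s in a..b, h s), ρ y := by
  set Φ : ℝ → ℝ := fun y => ∫ z in (0:ℝ)..y, ρ z
  have hΦ : ∀ y, HasDerivAt Φ (ρ y) y := fun y => (hρ.integral_hasStrictDerivAt 0 y).hasDerivAt
  have hΦ1 : ContDiff ℝ 1 Φ := contDiff_one_iff_deriv.2
    ⟨fun y => (hΦ y).differentiableAt, by rwa [show deriv Φ = ρ from funext fun y => (hΦ y).deriv]⟩
  have hq := hh.absolutelyContinuousOnInterval_intervalIntegral left_mem_uIcc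
  have hderiv : ∀ᵐ t, t ∈ uIoc a b →
      deriv (Φ ∘ fun t => ∫ s in a..t, h s) t = ρ (∫ s in a..t, h s) * h t := by
    filter_upwards [hh.ae_hasDerivAt_integral] with t ht htab
    exact ((hΦ _).comp t (ht (uIoc_subset_uIcc htab) a left_mem_uIcc)).deriv
  rw [← integral_congr_ae hderiv,
    (hΦ1.comp_absolutelyContinuousOnInterval hq).integral_deriv_eq_sub]
  simp [Φ]

theorem exists_solution_of_pos_of_le {F : ℝ → ℝ} {C : ℝ} (hF : Continuous F)
    (hpos : ∀ x, 0 < F x) (hle : ∀ x, F x ≤ C) :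
    ∃ P : ℝ → ℝ, Continuous P ∧ Monotone P ∧ (∀ x, P (∫ s in (0:ℝ)..x, (F s)⁻¹) = x) ∧
      ∀ t, P t = ∫ s in (0:ℝ)..t, F (P s) := by
  set G : ℝ → ℝ := fun x => ∫ s in (0:ℝ)..x, (F s)⁻¹
  have hFinv : Continuous fun s => (F s)⁻¹ := hF.inv₀ fun x => (hpos x).ne'
  have hG : ∀ x, HasDerivAt G (F x)⁻¹ x := fun x =>
    (hFinv.integral_hasStrictDerivAt 0 x).hasDerivAt
  have hC : 0 < C := (hpos 0).trans_le (hle 0)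
  have hG0 : G 0 = 0 := integral_same
  have hGlin : ∀ ⦃x y⦄, x ≤ y → C⁻¹ * (y - x) ≤ G y - G x :=
    mul_sub_le_image_sub_of_le_deriv (fun x => (hG x).differentiableAt)
      fun x => (hG x).deriv ▸ inv_anti₀ (hpos x) (hle x)
  have hGmono : StrictMono G := strictMono_of_hasDerivAt_pos hG fun x => inv_pos.2 (hpos x)
  have hGsurj : Function.Surjective G := by
    refine Continuous.surjective (continuous_iff_continuousAt.2 fun x => (hG x).continuousAt)
      (tendsto_atTop_mono' _ ?_ (tendsto_id.const_mul_atTop (inv_pos.2 hC)))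
      (tendsto_atBot_mono' _ ?_ (tendsto_id.const_mul_atBot (inv_pos.2 hC)))
    · filter_upwards [eventually_ge_atTop 0] with y hy
      simpa [hG0] using hGlin hy
    · filter_upwards [eventually_le_atBot 0] with y hy
      simpa [hG0] using hGlin hy
  set e := hGmono.orderIsoOfSurjective G hGsurj
  have hPG : ∀ x, e.symm (G x) = x := e.symm_apply_apply
  have hGP : ∀ t, G (e.symm t) = t := e.apply_symm_apply
  have hP : ∀ t, HasDerivAt e.symm (F (e.symm t)) t := fun t => by
    simpa using (hG (e.symm t)).of_local_left_inverse e.symm.continuous.continuousAt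
      (inv_ne_zero (hpos _).ne') (Eventually.of_forall hGP)
  refine ⟨e.symm, e.symm.continuous, e.symm.monotone, hPG, fun t => ?_⟩
  rw [integral_eq_sub_of_hasDerivAt (fun s _ => hP s)
    ((hF.comp e.symm.continuous).intervalIntegrable _ _), ← hG0, hPG, sub_zero]

/-- The cost `J_α(T, u)`. -/
noncomputable def cost (α T : ℝ) (u : ℝ → ℝ) : ℝ :=
  (1 - α) * (∫ t in (0:ℝ)..T, u t) + α * T

theorem exists_isTrajectory_const {f g : ℝ → ℝ} {θ M : ℝ} (hθ : 0 < θ) (hM : 0 ≤ M)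
    (hFc : ContinuousOn (fun p => f p + M * g p) (Icc 0 θ))
    (hF : ∀ p ∈ Icc 0 θ, 0 < f p + M * g p) :
    ∃ T p, 0 < T ∧ IsTrajectory f g T M (fun _ => M) p ∧ p T = θ ∧
      T = ∫ y in (0:ℝ)..θ, (f y + M * g y)⁻¹ := by
  set F₁ := IccExtend hθ.le ((Icc 0 θ).domRestrict fun p => f p + M * g p)
  have hF₁ : ∀ p ∈ Icc 0 θ, F₁ p = f p + M * g p := fun p hp => IccExtend_of_mem _ _ hp
  have hF₁c : Continuous F₁ := continuous_IccExtend_iff.2 hFc.domRestrict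
  obtain ⟨C, hC⟩ := (isCompact_Icc.image_of_continuousOn hFc).bddAbove
  have hF₁range : ∀ x, F₁ x ∈ (fun p => f p + M * g p) '' Icc 0 θ := fun x =>
    ⟨_, (projIcc 0 θ hθ.le x).2, rfl⟩
  have hF₁pos : ∀ x, 0 < F₁ x := fun x => by
    obtain ⟨p, hp, hpx⟩ := hF₁range x; exact hpx ▸ hF p hp
  have hF₁C : ∀ x, F₁ x ≤ C := fun x => hC (hF₁range x)
  obtain ⟨P, hPc, hPmono, hPinv, hPode⟩ := exists_solution_of_pos_of_le hF₁c hF₁pos hF₁C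
  have hT : (∫ y in (0:ℝ)..θ, (F₁ y)⁻¹) = ∫ y in (0:ℝ)..θ, (f y + M * g y)⁻¹ :=
    integral_congr fun y hy => by rw [uIcc_of_le hθ.le] at hy; rw [hF₁ y hy]
  set T := ∫ y in (0:ℝ)..θ, (F₁ y)⁻¹
  have hP0 : P 0 = 0 := by simpa using hPinv 0
  have hPT : P T = θ := hPinv θ
  have hPmaps : ∀ t ∈ Icc 0 T, P t ∈ Icc 0 θ := fun t ht =>
    ⟨hP0 ▸ hPmono ht.1, hPT ▸ hPmono ht.2⟩
  refine ⟨T, P, ?_, ⟨measurable_const, fun _ => ⟨hM, le_rfl⟩, hPc.continuousOn, hP0,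
    fun t ht => ?_⟩, hPT, hT⟩
  · exact intervalIntegral_pos_of_pos_on
      ((hF₁c.inv₀ fun x => (hF₁pos x).ne').intervalIntegrable _ _)
      (fun x _ => inv_pos.2 (hF₁pos x)) hθ
  · refine (hPode t).trans (integral_congr fun s hs => ?_)
    rw [uIcc_of_le ht.1] at hs
    exact hF₁ _ (hPmaps s ⟨hs.1, hs.2.trans ht.2⟩)

theorem add_mul_le_add_mul_of_le_of_le {a b c d M u : ℝ} (hu : u ∈ Icc 0 M) (h₀ : a ≤ c)
    (hM : a + M * b ≤ c + M * d) : a + u * b ≤ c + u * d := by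
  rcases hu.1.eq_or_lt with rfl | hu₀
  · simpa using h₀
  have key : 0 ≤ M * ((c + u * d) - (a + u * b)) := by
    nlinarith [mul_nonneg (sub_nonneg.2 hu.2) (sub_nonneg.2 h₀), mul_nonneg hu.1 (sub_nonneg.2 hM)]
  linarith [(mul_nonneg_iff_of_pos_left (hu₀.trans_le hu.2)).1 key]

theorem exists_calibration {f g : ℝ → ℝ} {U : Set ℝ} {θ M α : ℝ} (hU : IsOpen U)
    (hθU : Icc 0 θ ⊆ U) (hf : ContinuousOn f U) (hg : ContinuousOn g U)
    (hf_nonpos : ∀ p ∈ Icc 0 θ, f p ≤ 0) (hF : ∀ p ∈ Icc 0 θ, 0 < f p + M * g p)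
    (hM : 0 < M) (hα₀ : 0 < α) (hα₁ : α ≤ 1) :
    ∃ ρ : ℝ → ℝ, Continuous ρ ∧ (∀ p, 0 ≤ ρ p) ∧
      EqOn ρ (fun p => ((1 - α) * M + α) / (f p + M * g p)) (Icc 0 θ) ∧
      ∀ p, ∀ u ∈ Icc 0 M, ρ p * (f p + u * g p) ≤ (1 - α) * u + α := by
  set c := (1 - α) * M + α
  have hc : 0 < c := by have := mul_nonneg (sub_nonneg.2 hα₁) hM.le; positivity
  set F := fun p => f p + M * g p
  have hFc : ContinuousOn F U := hf.add (continuousOn_const.mul hg)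
  -- `V` is the open neighbourhood of `[0, θ]` on which the HJB inequality at `u = 0` survives
  set V := {p | p ∈ U ∧ 0 < min (F p) (α * F p - c * f p)}
  have hV : IsOpen V :=
    (hFc.inf ((continuousOn_const.mul hFc).sub (continuousOn_const.mul hf))).isOpen_inter_preimage
      hU isOpen_Ioi
  have hmemV : ∀ p ∈ V, 0 < F p ∧ c * f p < α * F p := fun p hp => by
    have := lt_min_iff.1 hp.2; exact ⟨this.1, by linarith [this.2]⟩
  have hθV : Icc 0 θ ⊆ V := fun p hp => ⟨hθU hp, lt_min_iff.2
    ⟨hF p hp, by nlinarith [hF p hp, hf_nonpos p hp]⟩⟩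
  obtain ⟨L, hL, hθL, hLV⟩ := exists_compact_between isCompact_Icc hV hθV
  obtain ⟨χ, hχV, hχ₁, hχ₀₁⟩ := exists_tsupport_one_of_isOpen_isClosed isOpen_interior
    (hL.closure_of_subset interior_subset) isClosed_Icc hθL
  have hχV : tsupport χ ⊆ V := hχV.trans (interior_subset.trans hLV)
  have hχ : ∀ p, χ p ≠ 0 → p ∈ V := fun p hp => hχV (subset_tsupport _ hp)
  refine ⟨fun p => χ p * (c / F p), ?_, fun p => ?_, fun p hp => ?_, fun p u hu => ?_⟩
  · refine continuous_of_tsupport fun p hp => ?_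
    have hpV := hχV (tsupport_mul_subset_left hp)
    exact χ.continuous.continuousAt.mul (continuousAt_const.div
      (hFc.continuousAt (hU.mem_nhds hpV.1)) (hmemV p hpV).1.ne')
  · by_cases h : χ p = 0
    · simp [h]
    · exact mul_nonneg (hχ₀₁ p).1 (div_nonneg hc.le (hmemV p (hχ p h)).1.le)
  · simp [hχ₁ hp, F]
  · have hαu : 0 ≤ (1 - α) * u + α := by nlinarith [hu.1]
    by_cases h : χ p = 0
    · simpa [h] using hαu
    obtain ⟨hFp, hfp⟩ := hmemV p (hχ p h)
    obtain ⟨hχ₀, hχ₁⟩ := hχ₀₁ p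
    set ρp := χ p * (c / F p)
    have hρF : ρp * f p + M * (ρp * g p) ≤ c := by
      have : ρp * F p = c * χ p := by simp only [ρp]; field_simp
      nlinarith
    have hρf : ρp * f p ≤ α := by
      rcases le_or_gt (f p) 0 with hf0 | hf0
      · nlinarith [mul_nonneg hχ₀ (div_nonneg hc.le hFp.le)]
      · calc ρp * f p ≤ c / F p * f p := by
              gcongr; nlinarith [div_pos hc hFp]
          _ ≤ α := by rw [div_mul_eq_mul_div, div_le_iff₀ hFp]; linarith
    calc ρp * (f p + u * g p) = ρp * f p + u * (ρp * g p) := by ring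
      _ ≤ α + u * (1 - α) := add_mul_le_add_mul_of_le_of_le hu hρf (by linarith)
      _ = (1 - α) * u + α := by ring

theorem integral_le_cost_of_calibration {f g ρ v q : ℝ → ℝ} {θ S M α : ℝ} (hθ : 0 < θ)
    (hS : 0 ≤ S) (hρ : Continuous ρ) (hρ₀ : ∀ p, 0 ≤ ρ p)
    (hHJB : ∀ p, ∀ u ∈ Icc 0 M, ρ p * (f p + u * g p) ≤ (1 - α) * u + α)
    (hq : IsTrajectory f g S M v q) (hqS : θ ≤ q S) :
    ∫ y in (0:ℝ)..θ, ρ y ≤ cost α S v := by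
  obtain ⟨hv, hvM, -, -, hqint⟩ := hq
  set h := fun s => f (q s) + v s * g (q s)
  have hqS' : q S = ∫ s in (0:ℝ)..S, h s := hqint S ⟨hS, le_rfl⟩
  have hh : IntervalIntegrable h volume 0 S := by
    by_contra hni
    rw [integral_undef hni] at hqS'
    linarith
  have hvint : IntervalIntegrable v volume 0 S :=
    (intervalIntegrable_const (c := M)).mono_fun hv.aestronglyMeasurable
      (Eventually.of_forall fun t => by
        simpa [abs_of_nonneg (hvM t).1, abs_of_nonneg ((hvM t).1.trans (hvM t).2)] using (hvM t).2)
  have hprim : ∀ t ∈ Icc 0 S, (∫ s in (0:ℝ)..t, h s) = q t := fun t ht => (hqint t ht).symm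
  calc ∫ y in (0:ℝ)..θ, ρ y
      ≤ ∫ y in (0:ℝ)..q S, ρ y := integral_mono_interval le_rfl hθ.le hqS
        (Eventually.of_forall fun y => hρ₀ y) (hρ.intervalIntegrable _ _)
    _ = ∫ t in (0:ℝ)..S, ρ (∫ s in (0:ℝ)..t, h s) * h t := by
        rw [hqS', integral_comp_primitive_mul hρ hh]
    _ ≤ ∫ t in (0:ℝ)..S, ((1 - α) * v t + α) := by
        refine integral_mono_on hS (hh.continuousOn_mul (hρ.comp_continuousOn
          (hh.absolutelyContinuousOnInterval_intervalIntegral left_mem_uIcc).continuousOn))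
          ((hvint.const_mul _).add intervalIntegrable_const) fun t ht => ?_
        rw [hprim t ht]
        exact hHJB _ _ (hvM t)
    _ = cost α S v := by
        rw [integral_add (hvint.const_mul _) intervalIntegrable_const,
          intervalIntegral.integral_const_mul, intervalIntegral.integral_const, cost, smul_eq_mul,
          sub_zero, mul_comm S]

theorem exists_optimal_const_control {f g : ℝ → ℝ} {U : Set ℝ} {θ M α : ℝ} (hU : IsOpen U)
    (hθU : Icc 0 θ ⊆ U) (hf : ContinuousOn f U) (hg : ContinuousOn g U) (hθ : 0 < θ)
    (hf_nonpos : ∀ p ∈ Icc 0 θ, f p ≤ 0) (hF : ∀ p ∈ Icc 0 θ, 0 < f p + M * g p)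
    (hM : 0 < M) (hα₀ : 0 < α) (hα₁ : α ≤ 1) :
    ∃ T p, 0 < T ∧ IsTrajectory f g T M (fun _ => M) p ∧ θ ≤ p T ∧
      ∀ S v q, 0 < S → IsTrajectory f g S M v q → θ ≤ q S → cost α T (fun _ => M) ≤ cost α S v := by
  obtain ⟨ρ, hρ, hρ₀, hρθ, hHJB⟩ := exists_calibration hU hθU hf hg hf_nonpos hF hM hα₀ hα₁
  obtain ⟨T, p, hT, hp, hpT, hTθ⟩ := exists_isTrajectory_const hθ hM.le
    ((hf.add (continuousOn_const.mul hg)).mono hθU) hF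
  refine ⟨T, p, hT, hp, hpT.ge, fun S v q hS hq hqS => ?_⟩
  calc cost α T (fun _ => M) = ∫ y in (0:ℝ)..θ, ρ y := by
        rw [integral_congr (hρθ.mono (uIcc_of_le hθ.le).subset)]
        simp only [div_eq_mul_inv, intervalIntegral.integral_const_mul, ← hTθ, cost,
          intervalIntegral.integral_const, smul_eq_mul, sub_zero]
        ring
    _ ≤ cost α S v := integral_le_cost_of_calibration hθ hS.le hρ hρ₀ hHJB hq hqS

theorem model_signs_of_mem_Icc {b1 b2 d1 d2 K sh θ p : ℝ} (hb1 : 0 < b1) (hb2 : 0 < b2)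
    (hd1 : 0 < d1) (hd2 : 0 < d2) (hK : 0 < K) (hsh0 : 0 < sh)
    (hlow : 1 - sh < d1 * b2 / (d2 * b1)) (hθ : θ = (1 / sh) * (1 - d1 * b2 / (d2 * b1)))
    (hp : p ∈ Icc 0 θ) :
    0 < b1 * (1 - p) * (1 - sh * p) + b2 * p ∧
      p * (1 - p) * (d1 * b2 - d2 * b1 * (1 - sh * p)) ≤ 0 ∧
      0 < (1 / K) * (b1 * (1 - p) * (1 - sh * p)) := by
  set r := d1 * b2 / (d2 * b1)
  have hr : r * (d2 * b1) = d1 * b2 := div_mul_cancel₀ _ (by positivity)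
  have hshθ : sh * θ = 1 - r := by rw [hθ]; field_simp
  have hp1 : p < 1 := by nlinarith [hp.2]
  have hshp : d1 * b2 ≤ d2 * b1 * (1 - sh * p) := by
    nlinarith [mul_le_mul_of_nonneg_left hp.2 hsh0.le, mul_pos hd2 hb1]
  have hshp' : 0 < 1 - sh * p := by
    by_contra! h; nlinarith [mul_pos hd1 hb2, mul_pos hd2 hb1]
  refine ⟨by nlinarith [mul_pos (mul_pos hb1 (sub_pos.2 hp1)) hshp', mul_nonneg hb2.le hp.1],
    mul_nonpos_of_nonneg_of_nonpos (mul_nonneg hp.1 (sub_pos.2 hp1).le) (by linarith), ?_⟩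
  have := sub_pos.2 hp1
  positivity

theorem stmt_17_general
    (b1 b2 d1 d2 K sh : ℝ)
    (hb1 : 0 < b1) (hb2 : 0 < b2) (hd1 : 0 < d1) (hd2 : 0 < d2)
    (hK : 0 < K) (hsh0 : 0 < sh)
    (hlow : 1 - sh < d1 * b2 / (d2 * b1)) (hhigh : d1 * b2 / (d2 * b1) < 1)
    (f g : ℝ → ℝ)
    (hf : ∀ p, f p = p * (1 - p) * (d1 * b2 - d2 * b1 * (1 - sh * p)) /
      (b1 * (1 - p) * (1 - sh * p) + b2 * p))
    (hg : ∀ p, g p = (1 / K) * (b1 * (1 - p) * (1 - sh * p)) /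
      (b1 * (1 - p) * (1 - sh * p) + b2 * p))
    (θ : ℝ) (hθ : θ = (1 / sh) * (1 - d1 * b2 / (d2 * b1)))
    (mstar : ℝ)
    (hmstar : IsGreatest ((fun p => -f p / g p) '' Set.Icc 0 θ) mstar)
    (M : ℝ) (hM : mstar < M)
    (α : ℝ) (hα0 : 0 < α) (hα1 : α ≤ 1) :
    ∃ T : ℝ, ∃ u p : ℝ → ℝ, 0 < T ∧ IsTrajectory f g T M u p ∧ θ ≤ p T ∧
      ∀ S : ℝ, ∀ v q : ℝ → ℝ, 0 < S → IsTrajectory f g S M v q → θ ≤ q S →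
        (1 - α) * (∫ t in (0:ℝ)..T, u t) + α * T
          ≤ (1 - α) * (∫ t in (0:ℝ)..S, v t) + α * S := by
  have hθ₀ : 0 < θ := by rw [hθ]; have := sub_pos.2 hhigh; positivity
  have hsigns := fun p (hp : p ∈ Icc 0 θ) =>
    model_signs_of_mem_Icc hb1 hb2 hd1 hd2 hK hsh0 hlow hθ hp
  have hf_nonpos : ∀ p ∈ Icc 0 θ, f p ≤ 0 := fun p hp =>
    hf p ▸ div_nonpos_of_nonpos_of_nonneg (hsigns p hp).2.1 (hsigns p hp).1.le
  have hg_pos : ∀ p ∈ Icc 0 θ, 0 < g p := fun p hp =>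
    hg p ▸ div_pos (hsigns p hp).2.2 (hsigns p hp).1
  have hF : ∀ p ∈ Icc 0 θ, 0 < f p + M * g p := fun p hp => by
    have := (div_le_iff₀ (hg_pos p hp)).1 (hmstar.2 ⟨p, hp, rfl⟩)
    nlinarith [hg_pos p hp]
  have hM₀ : 0 < M := by
    have := hF 0 ⟨le_rfl, hθ₀.le⟩
    rw [hf 0, zero_mul, zero_mul, zero_div, zero_add] at this
    exact pos_of_mul_pos_left this (hg_pos 0 ⟨le_rfl, hθ₀.le⟩).le
  set U := {p : ℝ | 0 < b1 * (1 - p) * (1 - sh * p) + b2 * p}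
  have hU : IsOpen U := isOpen_lt continuous_const (by fun_prop)
  have hfU : ContinuousOn f U := by
    rw [funext hf]; exact ContinuousOn.div (by fun_prop) (by fun_prop) fun p hp => hp.ne'
  have hgU : ContinuousOn g U := by
    rw [funext hg]; exact ContinuousOn.div (by fun_prop) (by fun_prop) fun p hp => hp.ne'
  obtain ⟨T, p, hT, hp, hpT, hopt⟩ := exists_optimal_const_control hU
    (fun p hp => (hsigns p hp).1) hfU hgU hθ₀ hf_nonpos hF hM₀ hα0 hα1
  exact ⟨T, fun _ => M, p, hT, hp, hpT, hopt⟩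

/-- existence for the free-horizon problem: for M > m* and α ∈ (0,1],
the infimum of J_α(T,u) = (1-α)∫₀^T u + αT over all pairs (T,u) with T > 0, u admissible
and p_u(T) ≥ θ, is attained by some admissible pair. -/
theorem stmt_17
    (b1 b2 d1 d2 K sh : ℝ)
    (hb1 : 0 < b1) (hb2 : 0 < b2) (hd1 : 0 < d1) (hd2 : 0 < d2)
    (hK : 0 < K) (hsh0 : 0 < sh) (hsh1 : sh ≤ 1)
    (hlow : 1 - sh < d1 * b2 / (d2 * b1)) (hhigh : d1 * b2 / (d2 * b1) < 1)
    (f g : ℝ → ℝ)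
    (hf : ∀ p, f p = p * (1 - p) * (d1 * b2 - d2 * b1 * (1 - sh * p)) /
      (b1 * (1 - p) * (1 - sh * p) + b2 * p))
    (hg : ∀ p, g p = (1 / K) * (b1 * (1 - p) * (1 - sh * p)) /
      (b1 * (1 - p) * (1 - sh * p) + b2 * p))
    (θ : ℝ) (hθ : θ = (1 / sh) * (1 - d1 * b2 / (d2 * b1)))
    (mstar : ℝ)
    (hmstar : IsGreatest ((fun p => -f p / g p) '' Set.Icc 0 θ) mstar)
    (M : ℝ) (hM : mstar < M)
    (α : ℝ) (hα0 : 0 < α) (hα1 : α ≤ 1) :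
    ∃ T : ℝ, ∃ u p : ℝ → ℝ, 0 < T ∧ IsTrajectory f g T M u p ∧ θ ≤ p T ∧
      ∀ S : ℝ, ∀ v q : ℝ → ℝ, 0 < S → IsTrajectory f g S M v q → θ ≤ q S →
        (1 - α) * (∫ t in (0:ℝ)..T, u t) + α * T
          ≤ (1 - α) * (∫ t in (0:ℝ)..S, v t) + α * S :=
  stmt_17_general b1 b2 d1 d2 K sh hb1 hb2 hd1 hd2 hK hsh0 hlow hhigh f g hf hg θ hθ mstar hmstar M
    hM α hα0 hα1
end
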